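/- Let y ∈ L¹(0,∞) and x ∈ Ω(y) = {z ∈ L¹(0,∞) : z ≺ y}. Suppose for some 0 < s₁ < s₂ < s₃ < s₄ < ∞ we have 0 ≤ μ(s_{i+1}; x₊) < μ(s_i; x₊) for i = 1,2,3, and ∫₀^{s₁} μ(t;x₊) dt + μ(s₁;x₊)(s - s₁) ≤ ∫₀^{s} μ(t;y₊) dt for all s ∈ [s₁, s₄]. Then x is not an extreme point of Ω(y). -/

import Mathlib

open MeasureTheory Set

/-- Decreasing rearrangement of `|f|` with respect to Lebesgue measure on `(0,∞)`. -/
noncomputable def rearr (f : ℝ → ℝ) (t : ℝ) : ℝ :=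
  sInf {s : ℝ | 0 ≤ s ∧ (volume.restrict (Set.Ioi (0:ℝ))) {x | s < |f x|} ≤ ENNReal.ofReal t}

/-- Positive part of a function. -/
noncomputable def posPart' (f : ℝ → ℝ) : ℝ → ℝ := fun t => max (f t) 0

/-- Negative part of a function. -/
noncomputable def negPart' (f : ℝ → ℝ) : ℝ → ℝ := fun t => max (-f t) 0

/-- Hardy–Littlewood–Pólya submajorization on `(0,∞)`. -/
def SubMaj (f g : ℝ → ℝ) : Prop :=
  ∀ t : ℝ, 0 ≤ t →
    (∫ s in Set.Ioc (0:ℝ) t, rearr f s) ≤ ∫ s in Set.Ioc (0:ℝ) t, rearr g s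

/-- Hardy–Littlewood–Pólya majorization on `(0,∞)`:
`f₊ ≺≺ g₊`, `f₋ ≺≺ g₋` and `∫ f = ∫ g`. -/
def Maj (f g : ℝ → ℝ) : Prop :=
  SubMaj (posPart' f) (posPart' g) ∧ SubMaj (negPart' f) (negPart' g) ∧
    (∫ t in Set.Ioi (0:ℝ), f t) = ∫ t in Set.Ioi (0:ℝ), g t

/-! Perturb `x` by `±d` with `d = ε (m(B) χ_A - m(A) χ_B)`, where `A` and `B` are level bands
of `x₊` around the values `μ(s₂; x₊)` and `μ(s₃; x₊)`: the strict decrease of `μ(·; x₊)` at `s₂`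
and `s₃` gives them positive measure. Then `d` only moves values of `x₊` lying strictly between
`μ(s₄; x₊)` and `μ(s₁; x₊)`, by less than either gap, and `∫ d = 0`. Consequently
`μ(t; x₊ ± d) ≤ μ(t; x₊)` for `t ≤ s₁`; on `[s₁, s₄]` the integral `∫₀ᵗ μ(s; x₊ ± d) ds` grows
at rate at most `μ(s₁; x₊)`, which the slack hypothesis absorbs; and for `t ≥ s₄` the identity
`∫₀ᵗ μ(s; f) ds = ∫₀^∞ min(m{|f| > u}, t) du` shows that the integral is unchanged, since the
distribution function below the moved levels and the total mass `∫ x₊` are. -/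

open scoped ENNReal Topology
open Filter

local notation "μ₊" => volume.restrict (Ioi (0:ℝ))

noncomputable def distFun (f : ℝ → ℝ) (u : ℝ) : ℝ≥0∞ := μ₊ {z | u < |f z|}

section Rearrangement

variable {f g : ℝ → ℝ} {s u : ℝ}

lemma rearr_eq_sInf (f : ℝ → ℝ) (s : ℝ) :
    rearr f s = sInf {v | 0 ≤ v ∧ distFun f v ≤ ENNReal.ofReal s} := rfl

lemma distFun_antitone (f : ℝ → ℝ) : Antitone (distFun f) :=
  fun _ _ huv => measure_mono fun _ hz => lt_of_le_of_lt huv hz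

lemma distFun_congr_ae (h : f =ᵐ[μ₊] g) : distFun f = distFun g := by
  funext u
  refine measure_congr ?_
  filter_upwards [h] with z hz
  change (u < |f z|) = (u < |g z|)
  rw [hz]

lemma rearr_congr_ae (h : f =ᵐ[μ₊] g) : rearr f = rearr g := by
  funext t
  rw [rearr_eq_sInf, rearr_eq_sInf, distFun_congr_ae h]

lemma rearr_nonneg (f : ℝ → ℝ) (s : ℝ) : 0 ≤ rearr f s :=
  Real.sInf_nonneg fun _ hv => hv.1

lemma rearr_le_of_distFun_le (hu : 0 ≤ u) (h : distFun f u ≤ ENNReal.ofReal s) :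
    rearr f s ≤ u :=
  csInf_le ⟨0, fun _ hv => hv.1⟩ ⟨hu, h⟩

lemma distFun_lt_top (hf : Integrable f μ₊) (hu : 0 < u) : distFun f u < ∞ := by
  simpa only [distFun, Real.norm_eq_abs] using hf.measure_norm_gt_lt_top hu

lemma exists_distFun_le (hf : Integrable f μ₊) (hs : 0 < s) :
    ∃ v, 0 ≤ v ∧ distFun f v ≤ ENNReal.ofReal s := by
  have hempty : ⋂ v : ℝ, {z | v < |f z|} = ∅ :=
    eq_empty_of_forall_notMem fun z hz => lt_irrefl |f z| (mem_iInter.1 hz |f z|)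
  have hlim : Tendsto (distFun f) atTop (𝓝 0) := by
    have h := tendsto_measure_iInter_atTop (μ := μ₊)
      (fun v => nullMeasurableSet_lt aemeasurable_const hf.1.aemeasurable.abs)
      (fun _ _ huv _ hz => lt_of_le_of_lt huv hz : Antitone fun v : ℝ => {z | v < |f z|})
      ⟨1, (distFun_lt_top hf one_pos).ne⟩
    rwa [hempty, measure_empty] at h
  obtain ⟨v, hv⟩ := eventually_atTop.1 (hlim.eventually (ge_mem_nhds (ENNReal.ofReal_pos.2 hs)))
  exact ⟨max v 0, le_max_right _ _, hv _ (le_max_left _ _)⟩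

lemma distFun_rearr_le (hf : Integrable f μ₊) (hs : 0 < s) :
    distFun f (rearr f s) ≤ ENNReal.ofReal s := by
  set r := rearr f s
  have hunion : {z | r < |f z|} = ⋃ n : ℕ, {z | r + 1 / (n + 1) < |f z|} := by
    ext z
    simp only [mem_ofPred_eq, mem_iUnion]
    refine ⟨fun hz => ?_, fun ⟨n, hn⟩ => lt_of_le_of_lt (le_add_of_nonneg_right (by positivity)) hn⟩
    obtain ⟨n, hn⟩ := exists_nat_one_div_lt (sub_pos.2 hz)
    exact ⟨n, by linarith⟩
  have hmono : Monotone fun n : ℕ => {z | r + 1 / ((n : ℝ) + 1) < |f z|} :=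
    fun m n hmn z (hz : r + 1 / ((m : ℝ) + 1) < |f z|) =>
      show r + 1 / ((n : ℝ) + 1) < |f z| from
        lt_of_le_of_lt (add_le_add_right (Nat.one_div_le_one_div hmn) r) hz
  have hlim := tendsto_measure_iUnion_atTop (μ := μ₊) hmono
  rw [← hunion] at hlim
  refine le_of_tendsto' hlim fun n => ?_
  obtain ⟨w, hw, hwr⟩ := exists_lt_of_csInf_lt (exists_distFun_le hf hs)
    (lt_add_of_pos_right r (by positivity : (0 : ℝ) < 1 / (n + 1)))
  exact (distFun_antitone f hwr.le).trans hw.2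

lemma rearr_le_iff (hf : Integrable f μ₊) (hs : 0 < s) (hu : 0 ≤ u) :
    rearr f s ≤ u ↔ distFun f u ≤ ENNReal.ofReal s :=
  ⟨fun h => (distFun_antitone f h).trans (distFun_rearr_le hf hs), rearr_le_of_distFun_le hu⟩

lemma lt_rearr_iff (hf : Integrable f μ₊) (hs : 0 < s) (hu : 0 ≤ u) :
    u < rearr f s ↔ ENNReal.ofReal s < distFun f u := by
  simpa only [not_le] using (rearr_le_iff hf hs hu).not

lemma rearr_antitoneOn (hf : Integrable f μ₊) : AntitoneOn (rearr f) (Ioi 0) :=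
  fun s hs _ _ hss' => rearr_le_of_distFun_le (rearr_nonneg f s)
    ((distFun_rearr_le hf hs).trans (ENNReal.ofReal_le_ofReal hss'))

end Rearrangement

section LayerCake

variable {f g : ℝ → ℝ} {t θ : ℝ}

lemma lintegral_distFun (hf : AEMeasurable f μ₊) :
    ∫⁻ u in Ioi 0, distFun f u = ∫⁻ z, ENNReal.ofReal |f z| ∂μ₊ :=
  (lintegral_eq_lintegral_meas_lt μ₊ (ae_of_all _ fun z => abs_nonneg (f z)) hf.abs).symm

lemma volume_ofReal_lt_inter_Ioc (D : ℝ≥0∞) (t : ℝ) :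
    volume ({s : ℝ | ENNReal.ofReal s < D} ∩ Ioc 0 t) = min D (ENNReal.ofReal t) := by
  rcases eq_or_ne D ∞ with rfl | hD
  · simp [ENNReal.ofReal_lt_top]
  obtain ⟨d, rfl⟩ : ∃ d, D = ENNReal.ofReal d := ⟨D.toReal, (ENNReal.ofReal_toReal hD).symm⟩
  rcases lt_or_ge t d with htd | hdt
  · have hset : {s : ℝ | ENNReal.ofReal s < ENNReal.ofReal d} ∩ Ioc 0 t = Ioc 0 t :=
      inter_eq_right.2 fun s hs =>
        (ENNReal.ofReal_lt_ofReal_iff ((hs.1.trans_le hs.2).trans htd)).2 (hs.2.trans_lt htd)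
    rw [hset, Real.volume_Ioc, sub_zero, min_eq_right (ENNReal.ofReal_le_ofReal htd.le)]
  · have hset : {s : ℝ | ENNReal.ofReal s < ENNReal.ofReal d} ∩ Ioc 0 t = Ioo 0 d := by
      ext s
      simp only [mem_inter_iff, mem_ofPred_eq, mem_Ioc, mem_Ioo]
      constructor
      · rintro ⟨hsd, hs0, -⟩
        exact ⟨hs0, (ENNReal.ofReal_lt_ofReal_iff'.1 hsd).1⟩
      · rintro ⟨hs0, hsd⟩
        exact ⟨(ENNReal.ofReal_lt_ofReal_iff (hs0.trans hsd)).2 hsd, hs0, hsd.le.trans hdt⟩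
    rw [hset, Real.volume_Ioo, sub_zero, min_eq_left (ENNReal.ofReal_le_ofReal hdt)]

lemma lintegral_rearr (hf : Integrable f μ₊) (t : ℝ) :
    ∫⁻ s in Ioc 0 t, ENNReal.ofReal (rearr f s) =
      ∫⁻ u in Ioi 0, min (distFun f u) (ENNReal.ofReal t) := by
  rw [lintegral_eq_lintegral_meas_lt _ (ae_of_all _ (rearr_nonneg f))
    (aemeasurable_restrict_of_antitoneOn measurableSet_Ioc
      ((rearr_antitoneOn hf).mono Ioc_subset_Ioi_self))]
  refine setLIntegral_congr_fun measurableSet_Ioi fun u hu => ?_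
  have hset : {s | u < rearr f s} ∩ Ioc 0 t = {s | ENNReal.ofReal s < distFun f u} ∩ Ioc 0 t := by
    ext s
    simp only [mem_inter_iff, mem_ofPred_eq]
    exact and_congr_left fun hs => lt_rearr_iff hf hs.1 (le_of_lt hu)
  rw [Measure.restrict_apply' measurableSet_Ioc, hset, volume_ofReal_lt_inter_Ioc]

lemma integrableOn_rearr (hf : Integrable f μ₊) (t : ℝ) : IntegrableOn (rearr f) (Ioc 0 t) := by
  refine ⟨(aemeasurable_restrict_of_antitoneOn measurableSet_Ioc
    ((rearr_antitoneOn hf).mono Ioc_subset_Ioi_self)).aestronglyMeasurable, ?_⟩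
  rw [hasFiniteIntegral_iff_ofReal (ae_of_all _ (rearr_nonneg f)), lintegral_rearr hf]
  calc ∫⁻ u in Ioi 0, min (distFun f u) (ENNReal.ofReal t)
      ≤ ∫⁻ u in Ioi 0, distFun f u := lintegral_mono fun _ => min_le_left _ _
    _ = ∫⁻ z, ENNReal.ofReal |f z| ∂μ₊ := lintegral_distFun hf.aemeasurable
    _ < ∞ := hf.abs.lintegral_lt_top

lemma integral_rearr_eq_toReal (hf : Integrable f μ₊) (t : ℝ) :
    ∫ s in Ioc 0 t, rearr f s = (∫⁻ u in Ioi 0, min (distFun f u) (ENNReal.ofReal t)).toReal := by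
  rw [integral_eq_lintegral_of_nonneg_ae (ae_of_all _ (rearr_nonneg f))
    (integrableOn_rearr hf t).1, lintegral_rearr hf]

lemma integral_rearr_le_add {t' : ℝ} (hf : Integrable f μ₊) (ht' : 0 < t') (htt' : t' ≤ t) :
    ∫ s in Ioc 0 t, rearr f s ≤ (∫ s in Ioc 0 t', rearr f s) + (t - t') * rearr f t' := by
  rw [← Ioc_union_Ioc_eq_Ioc ht'.le htt', setIntegral_union (Ioc_disjoint_Ioc_of_le le_rfl)
    measurableSet_Ioc ((integrableOn_rearr hf t).mono_set (Ioc_subset_Ioc_right htt'))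
    ((integrableOn_rearr hf t).mono_set (Ioc_subset_Ioc_left ht'.le))]
  gcongr
  calc ∫ s in Ioc t' t, rearr f s ≤ ∫ _ in Ioc t' t, rearr f t' :=
        setIntegral_mono_on ((integrableOn_rearr hf t).mono_set (Ioc_subset_Ioc_left ht'.le))
          (integrableOn_const measure_Ioc_lt_top.ne) measurableSet_Ioc
          fun s hs => rearr_antitoneOn hf ht' (ht'.trans hs.1) hs.1.le
    _ = (t - t') * rearr f t' := by
        rw [setIntegral_const, Real.volume_real_Ioc_of_le htt', smul_eq_mul]

lemma lintegral_Ioi_distFun_eq (hf : Integrable f μ₊) (hg : Integrable g μ₊) (hθ : 0 ≤ θ)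
    (heq : ∀ u ≤ θ, distFun g u = distFun f u) (hnorm : ∫ z, |g z| ∂μ₊ = ∫ z, |f z| ∂μ₊) :
    ∫⁻ u in Ioi θ, distFun g u = ∫⁻ u in Ioi θ, distFun f u := by
  have htotal : ∀ h : ℝ → ℝ, Integrable h μ₊ →
      ∫⁻ u in Ioi 0, distFun h u = ENNReal.ofReal (∫ z, |h z| ∂μ₊) := fun h hh => by
    rw [lintegral_distFun hh.aemeasurable,
      ofReal_integral_eq_lintegral_ofReal hh.abs (ae_of_all _ fun z => abs_nonneg _)]
  have hsplit : ∀ h : ℝ → ℝ, ∫⁻ u in Ioi 0, distFun h u =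
      (∫⁻ u in Ioc 0 θ, distFun h u) + ∫⁻ u in Ioi θ, distFun h u := fun h => by
    rw [← lintegral_union measurableSet_Ioi Ioc_disjoint_Ioi_same, Ioc_union_Ioi_eq_Ioi hθ]
  have hlow : ∫⁻ u in Ioc 0 θ, distFun g u = ∫⁻ u in Ioc 0 θ, distFun f u :=
    setLIntegral_congr_fun measurableSet_Ioc fun u hu => heq u hu.2
  have hfin : ∫⁻ u in Ioc 0 θ, distFun f u ≠ ∞ :=
    ne_top_of_le_ne_top (by rw [htotal f hf]; exact ENNReal.ofReal_ne_top)
      (lintegral_mono_set Ioc_subset_Ioi_self)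
  have h := htotal g hg
  rw [hnorm, ← htotal f hf, hsplit, hsplit, hlow] at h
  exact (ENNReal.add_right_inj hfin).1 h

lemma integral_rearr_eq_of_distFun_eq (hf : Integrable f μ₊) (hg : Integrable g μ₊) (hθ : 0 ≤ θ)
    (heq : ∀ u ≤ θ, distFun g u = distFun f u) (hnorm : ∫ z, |g z| ∂μ₊ = ∫ z, |f z| ∂μ₊)
    (ht : distFun f θ ≤ ENNReal.ofReal t) :
    ∫ s in Ioc 0 t, rearr g s = ∫ s in Ioc 0 t, rearr f s := by
  have htail : ∀ h : ℝ → ℝ, distFun h θ ≤ ENNReal.ofReal t →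
      ∫⁻ u in Ioi θ, min (distFun h u) (ENNReal.ofReal t) = ∫⁻ u in Ioi θ, distFun h u :=
    fun h hh => setLIntegral_congr_fun measurableSet_Ioi fun u hu =>
      min_eq_left ((distFun_antitone h (le_of_lt hu)).trans hh)
  rw [integral_rearr_eq_toReal hg, integral_rearr_eq_toReal hf, ← Ioc_union_Ioi_eq_Ioi hθ,
    lintegral_union measurableSet_Ioi Ioc_disjoint_Ioi_same,
    lintegral_union measurableSet_Ioi Ioc_disjoint_Ioi_same, htail g (by rwa [heq θ le_rfl]),
    htail f ht, lintegral_Ioi_distFun_eq hf hg hθ heq hnorm,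
    setLIntegral_congr_fun measurableSet_Ioc fun u hu => by rw [heq u hu.2]]

end LayerCake

section Perturbation

variable {p d g : ℝ → ℝ} {a b c : ℝ}

lemma abs_add_eq_of_support (hcb : c ≤ b) (hdc : ∀ z, |d z| ≤ c)
    (hsupp : ∀ z, d z ≠ 0 → b < p z) (z : ℝ) : |p z + d z| = |p z| + d z := by
  by_cases hz : d z = 0
  · simp [hz]
  have hb := hsupp z hz
  have hd := abs_le.1 (hdc z)
  rw [abs_of_pos (by linarith), abs_of_pos (by linarith)]

lemma distFun_add_eq (hcb : c ≤ b) (hdc : ∀ z, |d z| ≤ c)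
    (hsupp : ∀ z, d z ≠ 0 → b < p z ∧ p z ≤ a) {u : ℝ} (hu : u ≤ b - c ∨ a + c ≤ u) :
    distFun (p + d) u = distFun p u := by
  refine congrArg μ₊ (ext fun z => ?_)
  simp only [mem_ofPred_eq, Pi.add_apply,
    abs_add_eq_of_support hcb hdc (fun z hz => (hsupp z hz).1) z]
  by_cases hz : d z = 0
  · simp [hz]
  obtain ⟨hb, ha⟩ := hsupp z hz
  have hd := abs_le.1 (hdc z)
  rw [abs_of_pos (by linarith)]
  rcases hu with hu | hu <;> constructor <;> intro <;> linarith

variable (hp : Integrable p μ₊) (hcb : c ≤ b) (hdc : ∀ z, |d z| ≤ c)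
  (hsupp : ∀ z, d z ≠ 0 → b < p z ∧ p z ≤ a)
include hp hcb hdc hsupp

lemma rearr_add_le {s : ℝ} (hs : 0 < s) (hs' : a + c ≤ rearr p s) :
    rearr (p + d) s ≤ rearr p s :=
  rearr_le_of_distFun_le (rearr_nonneg p s)
    ((distFun_add_eq hcb hdc hsupp (Or.inr hs')).trans_le (distFun_rearr_le hp hs))

lemma integral_rearr_add_eq (hd : Integrable d μ₊) (hd0 : ∫ z, d z ∂μ₊ = 0) {t : ℝ}
    (ht : 0 < t) (ht' : rearr p t ≤ b - c) :
    ∫ s in Ioc 0 t, rearr (p + d) s = ∫ s in Ioc 0 t, rearr p s := by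
  have hθ : 0 ≤ b - c := sub_nonneg.2 hcb
  refine integral_rearr_eq_of_distFun_eq hp (hp.add hd) hθ
    (fun u hu => distFun_add_eq hcb hdc hsupp (Or.inl hu)) ?_ ((rearr_le_iff hp ht hθ).1 ht')
  simp only [Pi.add_apply, abs_add_eq_of_support hcb hdc fun z hz => (hsupp z hz).1]
  rw [integral_add hp.abs hd, hd0, add_zero]

lemma subMaj_add (hd : Integrable d μ₊) (hd0 : ∫ z, d z ∂μ₊ = 0) (hpg : SubMaj p g)
    {s₁ s₄ : ℝ} (hs₁ : 0 < s₁) (hs₁₄ : s₁ ≤ s₄) (ha : a + c ≤ rearr p s₁)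
    (hb : rearr p s₄ ≤ b - c)
    (hslack : ∀ s ∈ Icc s₁ s₄, (∫ t in Ioc 0 s₁, rearr p t) + rearr p s₁ * (s - s₁) ≤
      ∫ t in Ioc 0 s, rearr g t) :
    SubMaj (p + d) g := by
  have hlow : ∀ t ≤ s₁, ∫ s in Ioc 0 t, rearr (p + d) s ≤ ∫ s in Ioc 0 t, rearr p s :=
    fun t ht => setIntegral_mono_on (integrableOn_rearr (hp.add hd) t) (integrableOn_rearr hp t)
      measurableSet_Ioc fun s hs => rearr_add_le hp hcb hdc hsupp hs.1
        (ha.trans (rearr_antitoneOn hp hs.1 hs₁ (hs.2.trans ht)))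
  intro t ht
  rcases le_or_gt t s₁ with hts₁ | hs₁t
  · exact (hlow t hts₁).trans (hpg t ht)
  rcases le_or_gt t s₄ with hts₄ | hs₄t
  · calc ∫ s in Ioc 0 t, rearr (p + d) s
        ≤ (∫ s in Ioc 0 s₁, rearr (p + d) s) + (t - s₁) * rearr (p + d) s₁ :=
          integral_rearr_le_add (hp.add hd) hs₁ hs₁t.le
      _ ≤ (∫ s in Ioc 0 s₁, rearr p s) + rearr p s₁ * (t - s₁) := by
          rw [mul_comm (rearr p s₁)]
          exact add_le_add (hlow s₁ le_rfl) (mul_le_mul_of_nonneg_left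
            (rearr_add_le hp hcb hdc hsupp hs₁ ha) (sub_nonneg.2 hs₁t.le))
      _ ≤ _ := hslack t ⟨hs₁t.le, hts₄⟩
  · have hs₄ : 0 < s₄ := hs₁.trans_le hs₁₄
    rw [integral_rearr_add_eq hp hcb hdc hsupp hd hd0 (hs₄.trans hs₄t)
      ((rearr_antitoneOn hp hs₄ (hs₄.trans hs₄t) hs₄t.le).trans hb)]
    exact hpg t ht

end Perturbation

lemma exists_balanced_perturbation {α : Type*} [MeasurableSpace α] {μ : Measure α} {A B : Set α}
    (hA : MeasurableSet A) (hB : MeasurableSet B) (hAB : Disjoint A B) (hA0 : μ A ≠ 0)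
    (hAt : μ A ≠ ∞) (hB0 : μ B ≠ 0) (hBt : μ B ≠ ∞) {c : ℝ} (hc : 0 < c) :
    ∃ d : α → ℝ, Integrable d μ ∧ ∫ z, d z ∂μ = 0 ∧ (∀ z, |d z| ≤ c) ∧
      (∀ z, d z ≠ 0 → z ∈ A ∪ B) ∧ ¬ d =ᵐ[μ] 0 := by
  have hmA : 0 < μ.real A := ENNReal.toReal_pos hA0 hAt
  have hmB : 0 < μ.real B := ENNReal.toReal_pos hB0 hBt
  set ε := c / (μ.real A + μ.real B)
  have hεA : ε * μ.real A ≤ c := by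
    rw [div_mul_eq_mul_div, div_le_iff₀ (by positivity)]; nlinarith
  have hεB : ε * μ.real B ≤ c := by
    rw [div_mul_eq_mul_div, div_le_iff₀ (by positivity)]; nlinarith
  set d := A.indicator (fun _ => ε * μ.real B) - B.indicator (fun _ => ε * μ.real A)
  have hdA : ∀ z ∈ A, d z = ε * μ.real B := fun z hz => by
    simp [d, indicator_of_mem hz, indicator_of_notMem (hAB.notMem_of_mem_left hz)]
  have hdB : ∀ z ∈ B, d z = -(ε * μ.real A) := fun z hz => by
    simp [d, indicator_of_mem hz, indicator_of_notMem (hAB.notMem_of_mem_right hz)]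
  have hdO : ∀ z ∉ A ∪ B, d z = 0 := fun z hz => by
    simp_all [d, indicator_of_notMem]
  have hεpos : 0 < ε * μ.real B := by positivity
  have hiA : Integrable (A.indicator fun _ => ε * μ.real B) μ :=
    (integrable_indicator_iff hA).2 (integrableOn_const hAt)
  have hiB : Integrable (B.indicator fun _ => ε * μ.real A) μ :=
    (integrable_indicator_iff hB).2 (integrableOn_const hBt)
  refine ⟨d, hiA.sub hiB, ?_, fun z => ?_,
    fun z hz => not_not.1 fun h => hz (hdO z h), fun h => hA0 (measure_mono_null ?_ (ae_iff.1 h))⟩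
  · rw [integral_sub' hiA hiB, integral_indicator_const _ hA, integral_indicator_const _ hB,
      smul_eq_mul, smul_eq_mul]
    ring
  · by_cases hzA : z ∈ A
    · rw [hdA z hzA, abs_of_pos hεpos]; exact hεB
    by_cases hzB : z ∈ B
    · rw [hdB z hzB, abs_neg, abs_of_pos (by positivity)]; exact hεA
    rw [hdO z (by simp [hzA, hzB]), abs_zero]; exact hc.le
  · intro z hz
    simp only [mem_ofPred_eq, hdA z hz, Pi.zero_apply]
    exact hεpos.ne'

lemma measure_band_ne_zero {f : ℝ → ℝ} {s l h : ℝ} (hf : Integrable f μ₊) (hs : 0 < s) (hl : 0 ≤ l)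
    (hls : l < rearr f s) (hsh : rearr f s ≤ h) :
    μ₊ {z | l < |f z| ∧ |f z| ≤ h} ≠ 0 := by
  intro h0
  have hsub : {z | l < |f z|} ⊆ {z | l < |f z| ∧ |f z| ≤ h} ∪ {z | h < |f z|} := fun z hz => by
    by_cases hzh : |f z| ≤ h
    exacts [Or.inl ⟨hz, hzh⟩, Or.inr (not_le.1 hzh)]
  have hDl := (lt_rearr_iff hf hs hl).1 hls
  have hDh := (rearr_le_iff hf hs (hl.trans (hls.le.trans hsh))).1 hsh
  refine hDl.not_ge (((measure_mono hsub).trans ((measure_union_le _ _).trans ?_)).trans hDh)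
  rw [h0, zero_add]
  exact le_rfl

section Majorization

variable {x y d : ℝ → ℝ}

lemma posPart'_add (h : ∀ z, d z ≠ 0 → |d z| < x z) : posPart' (x + d) = posPart' x + d := by
  funext z
  by_cases hz : d z = 0
  · simp [posPart', hz]
  have hd := abs_lt.1 (h z hz)
  simp only [posPart', Pi.add_apply]
  rw [max_eq_left (by linarith), max_eq_left (by linarith)]

lemma negPart'_add (h : ∀ z, d z ≠ 0 → |d z| < x z) : negPart' (x + d) = negPart' x := by
  funext z
  by_cases hz : d z = 0
  · simp [negPart', hz]
  have hd := abs_lt.1 (h z hz)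
  simp only [negPart', Pi.add_apply]
  rw [max_eq_right (by linarith), max_eq_right (by linarith)]

lemma maj_congr_ae {x' : ℝ → ℝ} (h : x =ᵐ[μ₊] x') : Maj x y ↔ Maj x' y := by
  have hpos : rearr (posPart' x) = rearr (posPart' x') :=
    rearr_congr_ae (h.mono fun z hz => by simp only [posPart', hz])
  have hneg : rearr (negPart' x) = rearr (negPart' x') :=
    rearr_congr_ae (h.mono fun z hz => by simp only [negPart', hz])
  simp only [Maj, SubMaj, hpos, hneg, integral_congr_ae h]

lemma Maj.add (hmaj : Maj x y) (hx : Integrable x μ₊) (hd : Integrable d μ₊)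
    (hd0 : ∫ z, d z ∂μ₊ = 0) (hdx : ∀ z, d z ≠ 0 → |d z| < x z)
    (hpos : SubMaj (posPart' x + d) (posPart' y)) : Maj (x + d) y := by
  refine ⟨by rwa [posPart'_add hdx], by rw [negPart'_add hdx]; exact hmaj.2.1, ?_⟩
  simp only [Pi.add_apply]
  rw [integral_add hx hd, hd0, add_zero]
  exact hmaj.2.2

lemma Maj.add_of_slack {a b c s₁ s₄ : ℝ} (hmaj : Maj x y) (hx : Integrable x μ₊)
    (hd : Integrable d μ₊) (hd0 : ∫ z, d z ∂μ₊ = 0) (hcb : c ≤ b) (hdc : ∀ z, |d z| ≤ c)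
    (hsupp : ∀ z, d z ≠ 0 → b < posPart' x z ∧ posPart' x z ≤ a) (hs₁ : 0 < s₁) (hs₁₄ : s₁ ≤ s₄)
    (ha : a + c ≤ rearr (posPart' x) s₁) (hb : rearr (posPart' x) s₄ ≤ b - c)
    (hslack : ∀ s ∈ Icc s₁ s₄, (∫ t in Ioc 0 s₁, rearr (posPart' x) t) +
      rearr (posPart' x) s₁ * (s - s₁) ≤ ∫ t in Ioc 0 s, rearr (posPart' y) t) :
    Maj (x + d) y := by
  refine hmaj.add hx hd hd0 (fun z hz => ?_)
    (subMaj_add hx.pos_part hcb hdc hsupp hd hd0 hmaj.1 hs₁ hs₁₄ ha hb hslack)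
  have hlt : |d z| < max (x z) 0 := (hdc z).trans_lt (hcb.trans_lt (hsupp z hz).1)
  exact (lt_max_iff.1 hlt).resolve_right (not_lt.2 (abs_nonneg _))

end Majorization

theorem exists_maj_perturbation {x y : ℝ → ℝ} (hxm : Measurable x) (hx : Integrable x μ₊)
    (hmaj : Maj x y) {s₁ s₂ s₃ s₄ : ℝ} (h0 : 0 < s₁) (h12 : s₁ < s₂) (h23 : s₂ < s₃)
    (h34 : s₃ < s₄) (hdec₁ : rearr (posPart' x) s₂ < rearr (posPart' x) s₁)
    (hdec₂ : rearr (posPart' x) s₃ < rearr (posPart' x) s₂)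
    (hdec₃ : rearr (posPart' x) s₄ < rearr (posPart' x) s₃)
    (hslack : ∀ s ∈ Icc s₁ s₄, (∫ t in Ioc 0 s₁, rearr (posPart' x) t) +
      rearr (posPart' x) s₁ * (s - s₁) ≤ ∫ t in Ioc 0 s, rearr (posPart' y) t) :
    ∃ d : ℝ → ℝ, Integrable d μ₊ ∧ Maj (x + d) y ∧ Maj (x - d) y ∧ ¬ d =ᵐ[μ₊] 0 := by
  set p := posPart' x
  have hp : Integrable p μ₊ := hx.pos_part
  have hpm : Measurable p := hxm.max measurable_const
  have habs : ∀ z, |p z| = p z := fun z => abs_of_nonneg (le_max_right _ _)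
  set α := rearr p s₁
  set β := rearr p s₂
  set γ := rearr p s₃
  set ρ := rearr p s₄
  have hρ : 0 ≤ ρ := rearr_nonneg p s₄
  have hmeas : ∀ l h, MeasurableSet {z | l < |p z| ∧ |p z| ≤ h} := fun l h =>
    (measurableSet_lt measurable_const hpm.abs).inter (measurableSet_le hpm.abs measurable_const)
  have hfin : ∀ l h, 0 < l → μ₊ {z | l < |p z| ∧ |p z| ≤ h} ≠ ∞ := fun l h hl =>
    ne_top_of_le_ne_top (distFun_lt_top hp hl).ne (measure_mono fun z hz => hz.1)
  set A := {z | (β + γ) / 2 < |p z| ∧ |p z| ≤ β}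
  set B := {z | (γ + ρ) / 2 < |p z| ∧ |p z| ≤ γ}
  have hAB : Disjoint A B := disjoint_left.2 fun z hA hB => by linarith [hA.1, hB.2]
  set c := min (α - β) ((γ - ρ) / 4)
  have hcα : c ≤ α - β := min_le_left _ _
  have hcγ : c ≤ (γ - ρ) / 4 := min_le_right _ _
  obtain ⟨d, hd, hd0, hdc, hdAB, hdne⟩ := exists_balanced_perturbation (hmeas _ _) (hmeas _ _) hAB
    (measure_band_ne_zero hp (h0.trans h12) (by linarith) (by linarith) le_rfl)
    (hfin _ _ (by linarith))
    (measure_band_ne_zero hp (by linarith) (by linarith) (by linarith) le_rfl)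
    (hfin _ _ (by linarith)) (lt_min (by linarith) (by linarith) : 0 < c)
  have hsupp : ∀ z, d z ≠ 0 → (γ + ρ) / 2 < p z ∧ p z ≤ β := fun z hz => by
    rcases hdAB z hz with ⟨h1, h2⟩ | ⟨h1, h2⟩ <;> rw [habs] at h1 h2 <;>
      exact ⟨by linarith, by linarith⟩
  have hcb : c ≤ (γ + ρ) / 2 := by linarith
  have ha : β + c ≤ α := by linarith
  have hb : ρ ≤ (γ + ρ) / 2 - c := by linarith
  refine ⟨d, hd, hmaj.add_of_slack hx hd hd0 hcb hdc hsupp h0 (by linarith) ha hb hslack, ?_, hdne⟩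
  rw [sub_eq_add_neg]
  refine hmaj.add_of_slack hx hd.neg ?_ hcb (fun z => (abs_neg (d z)).trans_le (hdc z))
    (fun z hz => hsupp z (neg_ne_zero.1 hz)) h0 (by linarith) ha hb hslack
  simp only [Pi.neg_apply, integral_neg, hd0, neg_zero]

theorem stmt18_general (y x : ℝ → ℝ)
    (hx : IntegrableOn x (Set.Ioi 0)) (hmaj : Maj x y)
    (s₁ s₂ s₃ s₄ : ℝ) (h0 : 0 < s₁) (h12 : s₁ < s₂) (h23 : s₂ < s₃) (h34 : s₃ < s₄)
    (hdec₁ : rearr (posPart' x) s₂ < rearr (posPart' x) s₁)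
    (hdec₂ : rearr (posPart' x) s₃ < rearr (posPart' x) s₂)
    (hdec₃ : rearr (posPart' x) s₄ < rearr (posPart' x) s₃)
    (hslack : ∀ s ∈ Set.Icc s₁ s₄,
      (∫ t in Set.Ioc (0:ℝ) s₁, rearr (posPart' x) t) +
          rearr (posPart' x) s₁ * (s - s₁) ≤
        ∫ t in Set.Ioc (0:ℝ) s, rearr (posPart' y) t) :
    ∃ x₁ x₂ : ℝ → ℝ,
      (IntegrableOn x₁ (Set.Ioi 0) ∧ Maj x₁ y) ∧
      (IntegrableOn x₂ (Set.Ioi 0) ∧ Maj x₂ y) ∧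
      (∀ t, x t = (x₁ t + x₂ t) / 2) ∧
      ¬ x₁ =ᵐ[volume.restrict (Set.Ioi (0:ℝ))] x₂ := by
  set x' := hx.aemeasurable.mk x
  have hxx' : x =ᵐ[μ₊] x' := hx.aemeasurable.ae_eq_mk
  have hrx : rearr (posPart' x) = rearr (posPart' x') :=
    rearr_congr_ae (hxx'.mono fun z hz => by simp only [posPart', hz])
  rw [hrx] at hdec₁ hdec₂ hdec₃ hslack
  obtain ⟨d, hd, hmaj₁, hmaj₂, hd0⟩ := exists_maj_perturbation hx.aemeasurable.measurable_mk
    (hx.congr hxx') ((maj_congr_ae hxx').1 hmaj) h0 h12 h23 h34 hdec₁ hdec₂ hdec₃ hslack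
  refine ⟨x + d, x - d, ⟨hx.add hd, (maj_congr_ae (hxx'.add (.refl _ d))).2 hmaj₁⟩,
    ⟨hx.sub hd, (maj_congr_ae (hxx'.sub (.refl _ d))).2 hmaj₂⟩,
    fun t => by simp only [Pi.add_apply, Pi.sub_apply]; ring,
    fun h => hd0 ?_⟩
  filter_upwards [h] with z hz
  simp only [Pi.add_apply, Pi.sub_apply] at hz
  simp only [Pi.zero_apply]
  linarith

/-- Perturbation lemma: under the stated spacing and slack conditions on the
rearrangement of `x₊`, `x` is not an extreme point of `Ω(y)`. -/
theorem stmt18 (y x : ℝ → ℝ) (hy : IntegrableOn y (Set.Ioi 0))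
    (hx : IntegrableOn x (Set.Ioi 0)) (hmaj : Maj x y)
    (s₁ s₂ s₃ s₄ : ℝ) (h0 : 0 < s₁) (h12 : s₁ < s₂) (h23 : s₂ < s₃) (h34 : s₃ < s₄)
    (hdec₁ : rearr (posPart' x) s₂ < rearr (posPart' x) s₁)
    (hdec₂ : rearr (posPart' x) s₃ < rearr (posPart' x) s₂)
    (hdec₃ : rearr (posPart' x) s₄ < rearr (posPart' x) s₃)
    (hslack : ∀ s ∈ Set.Icc s₁ s₄,
      (∫ t in Set.Ioc (0:ℝ) s₁, rearr (posPart' x) t) +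
          rearr (posPart' x) s₁ * (s - s₁) ≤
        ∫ t in Set.Ioc (0:ℝ) s, rearr (posPart' y) t) :
    ∃ x₁ x₂ : ℝ → ℝ,
      (IntegrableOn x₁ (Set.Ioi 0) ∧ Maj x₁ y) ∧
      (IntegrableOn x₂ (Set.Ioi 0) ∧ Maj x₂ y) ∧
      (∀ t, x t = (x₁ t + x₂ t) / 2) ∧
      ¬ x₁ =ᵐ[volume.restrict (Set.Ioi (0:ℝ))] x₂ :=
  stmt18_general y x hx hmaj s₁ s₂ s₃ s₄ h0 h12 h23 h34 hdec₁ hdec₂ hdec₃ hslack
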